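/- Peak-fixing equivalence (Theorem 2): Suppose (v*₀,...,v*_{T−1}) maximizes J₀(v) = ∑_t [h(v_t) − f_t(v_t − g_t) − p·max(v_t − g_t − c_t(v), 0)] over the box v_t ∈ [L, R], where c_t(v) is the running max of (v_i − g_i) for i < t starting from 0, and c* = max_t (v*_t − g_t) is the resulting peak (assume c* ≥ 0). Then (v*₀,...,v*_{T−1}) also maximizes the decoupled objective J_c(v) = ∑_t [h(v_t) − f_t(v_t − g_t)] − p·c* over the smaller feasible set {v : v_t ∈ [L, R], v_t − g_t ≤ c* for all t}. -/

import Mathlib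

/-- Running maximum of a sequence starting from 0. -/
def runPeak0 (w : ℕ → ℝ) : ℕ → ℝ
  | 0 => 0
  | t + 1 => max (w t) (runPeak0 w t)

lemma runPeak0_nonneg (w : ℕ → ℝ) (T : ℕ) : 0 ≤ runPeak0 w T := by
  induction T with
  | zero => simp [runPeak0]
  | succ n ih => simp [runPeak0]; right; exact ih

lemma sum_peak (w : ℕ → ℝ) (T : ℕ) :
    ∑ t ∈ Finset.range T, max (w t - runPeak0 w t) 0 = runPeak0 w T := by
  induction T with
  | zero => simp [runPeak0]
  | succ n ih =>
    rw [Finset.sum_range_succ, ih]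
    rcases le_total (w n) (runPeak0 w n) with hle | hle <;>
      simp [runPeak0, max_eq_left, max_eq_right, hle, sub_nonneg.mpr hle,
        sub_nonpos.mpr hle] <;> linarith

lemma peak_eq (w : ℕ → ℝ) (T : ℕ) (hT : 1 ≤ T) :
    runPeak0 w T = max 0 ((Finset.range T).sup'
      (Finset.nonempty_range_iff.mpr (Nat.one_le_iff_ne_zero.mp hT)) w) := by
  induction T with
  | zero => omega
  | succ n ih =>
    rcases Nat.eq_or_lt_of_le hT with h1 | h1
    · have : n = 0 := by omega
      subst this
      simp [runPeak0, max_comm]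
    · have hn : 1 ≤ n := by omega
      have hne : (Finset.range n).Nonempty := Finset.nonempty_range_iff.mpr (by omega)
      rw [show runPeak0 w (n+1) = max (w n) (runPeak0 w n) from rfl, ih hn]
      have hs : (Finset.range (n+1)).sup' (Finset.nonempty_range_iff.mpr (by omega)) w
          = max (w n) ((Finset.range n).sup' hne w) := by
        simp [Finset.range_add_one]
        exact Finset.sup'_insert (f := w) (b := n) (s := Finset.range n) hne
      rw [hs, max_left_comm]

lemma peak_le (w : ℕ → ℝ) (T : ℕ) (M : ℝ) (hM : 0 ≤ M)
    (hle : ∀ t < T, w t ≤ M) : runPeak0 w T ≤ M := by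
  induction T with
  | zero => simpa [runPeak0]
  | succ n ih =>
    simp only [runPeak0, max_le_iff]
    exact ⟨hle n (by omega), ih fun t ht => hle t (by omega)⟩

theorem peak_fixing_equivalence (T : ℕ) (hT : 1 ≤ T)
    (h : ℝ → ℝ) (f : ℕ → ℝ → ℝ) (g : ℕ → ℝ) (p L R : ℝ)
    (hp : 0 ≤ p) (hLR : L ≤ R) (vstar : ℕ → ℝ)
    (hfeas : ∀ t < T, vstar t ∈ Set.Icc L R)
    (hopt : ∀ v : ℕ → ℝ, (∀ t < T, v t ∈ Set.Icc L R) →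
      (∑ t ∈ Finset.range T, (h (v t) - f t (v t - g t)
          - p * max (v t - g t - runPeak0 (fun i => v i - g i) t) 0))
      ≤ (∑ t ∈ Finset.range T, (h (vstar t) - f t (vstar t - g t)
          - p * max (vstar t - g t - runPeak0 (fun i => vstar i - g i) t) 0))) :
    ∀ v : ℕ → ℝ,
      (∀ t < T, v t ∈ Set.Icc L R ∧
        v t - g t ≤ max 0 ((Finset.range T).sup'
          (Finset.nonempty_range_iff.mpr (by omega)) (fun t => vstar t - g t))) →
      (∑ t ∈ Finset.range T, (h (v t) - f t (v t - g t)))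
        - p * max 0 ((Finset.range T).sup'
            (Finset.nonempty_range_iff.mpr (by omega)) (fun t => vstar t - g t))
      ≤ (∑ t ∈ Finset.range T, (h (vstar t) - f t (vstar t - g t)))
        - p * max 0 ((Finset.range T).sup'
            (Finset.nonempty_range_iff.mpr (by omega)) (fun t => vstar t - g t)) := by
  intro v hv
  set M : ℝ := max 0 ((Finset.range T).sup'
      (Finset.nonempty_range_iff.mpr (by omega)) (fun t => vstar t - g t)) with hMdef
  have hM0 : 0 ≤ M := le_max_left _ _
  -- J0 decomposition
  have key : ∀ u : ℕ → ℝ,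
      (∑ t ∈ Finset.range T, (h (u t) - f t (u t - g t)
          - p * max (u t - g t - runPeak0 (fun i => u i - g i) t) 0))
      = (∑ t ∈ Finset.range T, (h (u t) - f t (u t - g t)))
        - p * runPeak0 (fun i => u i - g i) T := by
    intro u
    rw [Finset.sum_sub_distrib, ← Finset.mul_sum, sum_peak]
  have hvfeas : ∀ t < T, v t ∈ Set.Icc L R := fun t ht => (hv t ht).1
  have h1 := hopt v hvfeas
  rw [key v, key vstar] at h1
  have hstar : runPeak0 (fun i => vstar i - g i) T = M := peak_eq _ T hT
  have hv2 : runPeak0 (fun i => v i - g i) T ≤ M :=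
    peak_le _ T M hM0 (fun t ht => (hv t ht).2)
  rw [hstar] at h1
  nlinarith [mul_le_mul_of_nonneg_left hv2 hp]
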